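/- (Oort–Peters conic–cubic intersections.) (a) The set of common zeros of Q1 and C1 in ℙ²(ℂ) is exactly {P1, P2, P3}, and at each of these points the gradient vectors of Q1 and C1 are both nonzero and proportional (Q1·C1 = 2(P1+P2+P3)). (b) The set of common zeros of Q1 and C2 is exactly {P, P2, P3}; at P2 and P3 the gradients of Q1 and C2 are both nonzero and proportional, while at P the gradient of C2 vanishes, i.e. ∇C2(3,0,2) = 0 (so C2 has a singular point at P), giving Q1·C2 = 2(P+P2+P3). (c) The set of common zeros of Q2 and C1 is exactly {P1, P4, P5}, with nonzero proportional gradients at each point (Q2·C1 = 2(P1+P4+P5)). (d) The set of common zeros of Q2 and C2 is exactly {P, P4, P5}; at P4 and P5 the gradients of Q2 and C2 are both nonzero and proportional, and at P the gradient of C2 vanishes (Q2·C2 = 2(P4+P5+P)). -/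

import Mathlib

noncomputable section

open MvPolynomial

/-- The polynomial ring `ℂ[x,y,z]`. -/
abbrev R3 : Type := MvPolynomial (Fin 3) ℂ

def x : R3 := X 0
def y : R3 := X 1
def z : R3 := X 2

/-- The Oort–Peters conic `Q1 = y² + 2x² − 2xy − 5xz + 2yz + 3z²`. -/
def Q1 : R3 := y^2 + 2*x^2 - 2*x*y - 5*x*z + 2*y*z + 3*z^2
/-- The Oort–Peters conic `Q2 = y² + 2x² + 2xy − 5xz − 2yz + 3z²`. -/
def Q2 : R3 := y^2 + 2*x^2 + 2*x*y - 5*x*z - 2*y*z + 3*z^2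
/-- The Oort–Peters cubic `C1 = y²z + x³ − 4x²z + 3xz²`. -/
def C1 : R3 := y^2*z + x^3 - 4*x^2*z + 3*x*z^2
/-- The Oort–Peters cubic `C2 = 2y²z − xy² + 4x²z − 12xz² + 9z³`. -/
def C2 : R3 := 2*y^2*z - x*y^2 + 4*x^2*z - 12*x*z^2 + 9*z^3

/-- `i√3`. -/
def s3 : ℂ := Complex.I * Real.sqrt 3

/-- Coordinate representative of `P = [3:0:2]` (i.e. `[3/2:0:1]`). -/
def P : Fin 3 → ℂ := ![3, 0, 2]
/-- Coordinate representative of `P1 = [1:0:1]`. -/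
def P1 : Fin 3 → ℂ := ![1, 0, 1]
/-- Coordinate representative of `P2 = [3+i√3 : 3+i√3 : 2]`. -/
def P2 : Fin 3 → ℂ := ![3+s3, 3+s3, 2]
/-- Coordinate representative of `P3 = [3−i√3 : 3−i√3 : 2]`. -/
def P3 : Fin 3 → ℂ := ![3-s3, 3-s3, 2]
/-- Coordinate representative of `P4 = [3+i√3 : −3−i√3 : 2]`. -/
def P4 : Fin 3 → ℂ := ![3+s3, -3-s3, 2]
/-- Coordinate representative of `P5 = [3−i√3 : −3+i√3 : 2]`. -/
def P5 : Fin 3 → ℂ := ![3-s3, -3+s3, 2]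
/-- Coordinate representative of `∞ = [0:1:0]`. -/
def Pinf : Fin 3 → ℂ := ![0, 1, 0]

/-- The gradient vector of `G` at the point `v ∈ ℂ³`. -/
def grad (G : R3) (v : Fin 3 → ℂ) : Fin 3 → ℂ := fun i => eval v (pderiv i G)

/-- The common zero locus of `G` and `H` in `ℙ²(ℂ)` is exactly the set of points with
coordinate representatives in the list `reps`. -/
def CommonZerosExactly (G H : R3) (reps : List (Fin 3 → ℂ)) : Prop :=
  (∀ w ∈ reps, eval w G = 0 ∧ eval w H = 0) ∧
  ∀ v : Fin 3 → ℂ, v ≠ 0 → eval v G = 0 → eval v H = 0 →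
    ∃ t : ℂ, t ≠ 0 ∧ ∃ w ∈ reps, v = t • w

/-- The curves `{G = 0}` and `{H = 0}` are tangent at the point with representative
`v`: both gradients are nonzero and they are proportional. -/
def TangentAt (G H : R3) (v : Fin 3 → ℂ) : Prop :=
  grad G v ≠ 0 ∧ grad H v ≠ 0 ∧ ∃ t : ℂ, t ≠ 0 ∧ grad H v = t • grad G v

/-! Everything is elimination in homogeneous coordinates `(a, b, c)`. Neither pair of curves
meets the line `c = 0`. Off it, `C1 - c Q1 = (a - c)(a² - 5ac + 3c² + 2bc)`, and the square of
`(2a - 3c)(a² - 3ac + 3c²)` lies in the ideal `(Q1, C2)`. The linear factors give `P1` and `P`;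
the other factors, together with `Q1`, force `b = a` and `a² - 3ac + 3c² = 0`, i.e. the point
`[3 + j : 3 + j : 2]` with `j² = -3`. These are `P2` and `P3`, so facts about them are proved once
for such a `j`. The reflection `b ↦ -b` maps `Q1` to `Q2`, fixes `C1`, `C2`, `P`, `P1`, sends
`P2`, `P3` to `P4`, `P5` and, being orthogonal, acts on gradients by itself; this carries (a) and
(b) over to (c) and (d). -/

lemma pderiv_ofNat {σ R : Type*} [CommSemiring R] (i : σ) (n : ℕ) [n.AtLeastTwo] :
    pderiv i (no_index (OfNat.ofNat n) : MvPolynomial σ R) = 0 := by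
  rw [← map_ofNat (C : R →+* MvPolynomial σ R) n, pderiv_C]

section Coordinates

variable (v : Fin 3 → ℂ)

lemma eval_Q1 : eval v Q1 =
    v 1 ^ 2 + 2 * v 0 ^ 2 - 2 * v 0 * v 1 - 5 * v 0 * v 2 + 2 * v 1 * v 2 + 3 * v 2 ^ 2 := by
  simp only [Q1, x, y, z, map_add, map_sub, map_mul, map_pow, eval_X, eval_ofNat]

lemma eval_Q2 : eval v Q2 =
    v 1 ^ 2 + 2 * v 0 ^ 2 + 2 * v 0 * v 1 - 5 * v 0 * v 2 - 2 * v 1 * v 2 + 3 * v 2 ^ 2 := by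
  simp only [Q2, x, y, z, map_add, map_sub, map_mul, map_pow, eval_X, eval_ofNat]

lemma eval_C1 : eval v C1 = v 1 ^ 2 * v 2 + v 0 ^ 3 - 4 * v 0 ^ 2 * v 2 + 3 * v 0 * v 2 ^ 2 := by
  simp only [C1, x, y, z, map_add, map_sub, map_mul, map_pow, eval_X, eval_ofNat]

lemma eval_C2 : eval v C2 =
    2 * v 1 ^ 2 * v 2 - v 0 * v 1 ^ 2 + 4 * v 0 ^ 2 * v 2 - 12 * v 0 * v 2 ^ 2 + 9 * v 2 ^ 3 := by
  simp only [C2, x, y, z, map_add, map_sub, map_mul, map_pow, eval_X, eval_ofNat]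

lemma grad_Q1 : grad Q1 v =
    ![4 * v 0 - 2 * v 1 - 5 * v 2, 2 * v 1 - 2 * v 0 + 2 * v 2,
      -5 * v 0 + 2 * v 1 + 6 * v 2] := by
  ext i; fin_cases i <;>
    simp only [grad, Q1, x, y, z, map_add, map_sub, map_mul, map_pow, Derivation.leibniz,
      Derivation.leibniz_pow, pderiv_X, pderiv_ofNat, Pi.single_apply, eval_X, eval_ofNat,
      smul_eq_mul, nsmul_eq_mul, map_zero, map_one, Nat.cast_ofNat, Fin.reduceFinMk, Fin.reduceEq,
      Fin.isValue, Matrix.cons_val, ↓reduceIte] <;> ring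

lemma grad_Q2 : grad Q2 v =
    ![4 * v 0 + 2 * v 1 - 5 * v 2, 2 * v 1 + 2 * v 0 - 2 * v 2,
      -5 * v 0 - 2 * v 1 + 6 * v 2] := by
  ext i; fin_cases i <;>
    simp only [grad, Q2, x, y, z, map_add, map_sub, map_mul, map_pow, Derivation.leibniz,
      Derivation.leibniz_pow, pderiv_X, pderiv_ofNat, Pi.single_apply, eval_X, eval_ofNat,
      smul_eq_mul, nsmul_eq_mul, map_zero, map_one, Nat.cast_ofNat, Fin.reduceFinMk, Fin.reduceEq,
      Fin.isValue, Matrix.cons_val, ↓reduceIte] <;> ring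

lemma grad_C1 : grad C1 v =
    ![3 * v 0 ^ 2 - 8 * v 0 * v 2 + 3 * v 2 ^ 2, 2 * v 1 * v 2,
      v 1 ^ 2 - 4 * v 0 ^ 2 + 6 * v 0 * v 2] := by
  ext i; fin_cases i <;>
    simp only [grad, C1, x, y, z, map_add, map_sub, map_mul, map_pow, Derivation.leibniz,
      Derivation.leibniz_pow, pderiv_X, pderiv_ofNat, Pi.single_apply, eval_X, eval_ofNat,
      smul_eq_mul, nsmul_eq_mul, map_zero, map_one, Nat.cast_ofNat, Fin.reduceFinMk, Fin.reduceEq,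
      Fin.isValue, Matrix.cons_val, ↓reduceIte] <;> ring

lemma grad_C2 : grad C2 v =
    ![-v 1 ^ 2 + 8 * v 0 * v 2 - 12 * v 2 ^ 2, 4 * v 1 * v 2 - 2 * v 0 * v 1,
      2 * v 1 ^ 2 + 4 * v 0 ^ 2 - 24 * v 0 * v 2 + 27 * v 2 ^ 2] := by
  ext i; fin_cases i <;>
    simp only [grad, C2, x, y, z, map_add, map_sub, map_mul, map_pow, Derivation.leibniz,
      Derivation.leibniz_pow, pderiv_X, pderiv_ofNat, Pi.single_apply, eval_X, eval_ofNat,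
      smul_eq_mul, nsmul_eq_mul, map_zero, map_one, Nat.cast_ofNat, Fin.reduceFinMk, Fin.reduceEq,
      Fin.isValue, Matrix.cons_val, ↓reduceIte] <;> ring

end Coordinates

def flipY : (Fin 3 → ℂ) ≃ₗ[ℂ] (Fin 3 → ℂ) :=
  LinearEquiv.ofInvolutive
    { toFun := fun v => ![v 0, -v 1, v 2]
      map_add' := fun v w => by ext i; fin_cases i <;> simp [add_comm]
      map_smul' := fun c v => by ext i; fin_cases i <;> simp }
    (fun v => by ext i; fin_cases i <;> simp)

lemma flipY_apply (v : Fin 3 → ℂ) : flipY v = ![v 0, -v 1, v 2] := rfl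

section Reflection

variable (v : Fin 3 → ℂ)

lemma eval_Q2_flipY : eval (flipY v) Q2 = eval v Q1 := by
  rw [eval_Q2, eval_Q1, flipY_apply]
  simp only [Matrix.cons_val]
  ring

lemma eval_C1_flipY : eval (flipY v) C1 = eval v C1 := by
  rw [eval_C1, eval_C1, flipY_apply]
  simp only [Matrix.cons_val]
  ring

lemma eval_C2_flipY : eval (flipY v) C2 = eval v C2 := by
  rw [eval_C2, eval_C2, flipY_apply]
  simp only [Matrix.cons_val]
  ring

lemma grad_Q2_flipY : grad Q2 (flipY v) = flipY (grad Q1 v) := by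
  rw [grad_Q2, grad_Q1, flipY_apply, flipY_apply]
  simp only [Matrix.cons_val]
  exact Matrix.vec3_eq (by ring) (by ring) (by ring)

lemma grad_C1_flipY : grad C1 (flipY v) = flipY (grad C1 v) := by
  rw [grad_C1, grad_C1, flipY_apply, flipY_apply]
  simp only [Matrix.cons_val]
  exact Matrix.vec3_eq (by ring) (by ring) (by ring)

lemma grad_C2_flipY : grad C2 (flipY v) = flipY (grad C2 v) := by
  rw [grad_C2, grad_C2, flipY_apply, flipY_apply]
  simp only [Matrix.cons_val]
  exact Matrix.vec3_eq (by ring) (by ring) (by ring)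

end Reflection

lemma flipY_P : flipY P = P := by simp [flipY_apply, P]
lemma flipY_P1 : flipY P1 = P1 := by simp [flipY_apply, P1]
lemma flipY_P2 : flipY P2 = P4 := by simp [flipY_apply, P2, P4, neg_add_eq_sub]
lemma flipY_P3 : flipY P3 = P5 := by simp [flipY_apply, P3, P5, neg_add_eq_sub]

theorem CommonZerosExactly.map {G H G' H' : R3} {reps : List (Fin 3 → ℂ)}
    (e : (Fin 3 → ℂ) ≃ₗ[ℂ] (Fin 3 → ℂ)) (hG : ∀ v, eval (e v) G' = eval v G)
    (hH : ∀ v, eval (e v) H' = eval v H) (h : CommonZerosExactly G H reps) :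
    CommonZerosExactly G' H' (reps.map e) := by
  refine ⟨?_, fun v hv hG' hH' => ?_⟩
  · simp only [List.mem_map]
    rintro _ ⟨w, hw, rfl⟩
    rw [hG, hH]
    exact h.1 w hw
  · obtain ⟨t, ht, w, hw, hvw⟩ := h.2 (e.symm v) ((LinearEquiv.map_ne_zero_iff _).2 hv)
      (by rwa [← hG, e.apply_symm_apply]) (by rwa [← hH, e.apply_symm_apply])
    refine ⟨t, ht, e w, List.mem_map_of_mem hw, ?_⟩
    rw [← map_smul, ← hvw, e.apply_symm_apply]

theorem TangentAt.map {G H G' H' : R3} {v v' : Fin 3 → ℂ}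
    (L : (Fin 3 → ℂ) ≃ₗ[ℂ] (Fin 3 → ℂ)) (hG : grad G' v' = L (grad G v))
    (hH : grad H' v' = L (grad H v)) (h : TangentAt G H v) :
    TangentAt G' H' v' := by
  obtain ⟨hGv, hHv, t, ht, hGH⟩ := h
  refine ⟨?_, ?_, t, ht, ?_⟩
  · rwa [hG, LinearEquiv.map_ne_zero_iff]
  · rwa [hH, LinearEquiv.map_ne_zero_iff]
  · rw [hG, hH, hGH, map_smul]

theorem tangentAt_of_eq_smul {G H : R3} {v : Fin 3 → ℂ} {t : ℂ} (hG : grad G v ≠ 0)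
    (ht : t ≠ 0) (hGH : grad H v = t • grad G v) : TangentAt G H v :=
  ⟨hG, hGH ▸ smul_ne_zero ht hG, t, ht, hGH⟩

theorem exists_smul_mem_of_cross_mul {v w : Fin 3 → ℂ} {reps : List (Fin 3 → ℂ)}
    (hw : w ∈ reps) (hv2 : v 2 ≠ 0) (hw2 : w 2 ≠ 0) (h0 : v 0 * w 2 = w 0 * v 2)
    (h1 : v 1 * w 2 = w 1 * v 2) :
    ∃ t : ℂ, t ≠ 0 ∧ ∃ w ∈ reps, v = t • w := by
  have hcoord (i : Fin 3) (h : v i * w 2 = w i * v 2) : v i = v 2 / w 2 * w i := by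
    field_simp
    linear_combination h
  refine ⟨v 2 / w 2, div_ne_zero hv2 hw2, w, hw, ?_⟩
  ext i; fin_cases i
  exacts [hcoord 0 h0, hcoord 1 h1, hcoord 2 (mul_comm _ _)]

lemma s3_sq : s3 ^ 2 = -3 := by
  simp [s3, mul_pow, ← Complex.ofReal_pow]

lemma forall_P2_P3 {p : (Fin 3 → ℂ) → Prop}
    (h : ∀ j : ℂ, j ^ 2 = -3 → p ![3 + j, 3 + j, 2]) : p P2 ∧ p P3 := by
  have hP3 : P3 = ![3 + -s3, 3 + -s3, 2] := by simp only [P3, sub_eq_add_neg]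
  exact ⟨h s3 s3_sq, hP3 ▸ h (-s3) (by rw [neg_sq, s3_sq])⟩

lemma grad_Q1_diag_ne_zero (a : ℂ) : grad Q1 ![a, a, 2] ≠ 0 := by
  rw [grad_Q1]; intro h; simpa using congrFun h 1

section DiagonalPoints

variable {j : ℂ} (hj : j ^ 2 = -3)
include hj

lemma eval_Q1_diag : eval ![3 + j, 3 + j, 2] Q1 = 0 := by
  rw [eval_Q1]
  simp only [Matrix.cons_val]
  linear_combination hj

lemma eval_C1_diag : eval ![3 + j, 3 + j, 2] C1 = 0 := by
  rw [eval_C1]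
  simp only [Matrix.cons_val]
  linear_combination (3 + j) * hj

lemma eval_C2_diag : eval ![3 + j, 3 + j, 2] C2 = 0 := by
  rw [eval_C2]
  simp only [Matrix.cons_val]
  linear_combination (3 - j) * hj

lemma three_add_mul_three_sub : (3 + j) * (3 - j) = 12 := by
  linear_combination -hj

lemma three_add_ne_zero : 3 + j ≠ 0 :=
  left_ne_zero_of_mul (by rw [three_add_mul_three_sub hj]; norm_num)

lemma three_sub_ne_zero : 3 - j ≠ 0 :=
  right_ne_zero_of_mul (by rw [three_add_mul_three_sub hj]; norm_num)

lemma tangentAt_Q1_C1_diag : TangentAt Q1 C1 ![3 + j, 3 + j, 2] := by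
  refine tangentAt_of_eq_smul (grad_Q1_diag_ne_zero _) (three_add_ne_zero hj) ?_
  rw [grad_Q1, grad_C1, Matrix.smul_vec3]
  simp only [Matrix.cons_val, smul_eq_mul]
  exact Matrix.vec3_eq (by linear_combination hj) (by ring) (by ring)

lemma tangentAt_Q1_C2_diag : TangentAt Q1 C2 ![3 + j, 3 + j, 2] := by
  refine tangentAt_of_eq_smul (grad_Q1_diag_ne_zero _) (three_sub_ne_zero hj) ?_
  rw [grad_Q1, grad_C2, Matrix.smul_vec3]
  simp only [Matrix.cons_val, smul_eq_mul]
  exact Matrix.vec3_eq (by linear_combination hj) (by linear_combination -2 * hj)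
    (by linear_combination 3 * hj)

end DiagonalPoints

lemma z_ne_zero_of_Q1_C1 {v : Fin 3 → ℂ} (hv : v ≠ 0) (hQ : eval v Q1 = 0)
    (hC : eval v C1 = 0) : v 2 ≠ 0 := by
  intro hz
  rw [eval_Q1, hz] at hQ
  rw [eval_C1, hz] at hC
  have hx : v 0 = 0 := pow_eq_zero_iff three_ne_zero |>.mp (by linear_combination hC)
  have hy : v 1 = 0 := pow_eq_zero_iff two_ne_zero |>.mp
    (by linear_combination hQ + (2 * v 1 - 2 * v 0) * hx)
  exact hv (by ext i; fin_cases i <;> assumption)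

lemma z_ne_zero_of_Q1_C2 {v : Fin 3 → ℂ} (hv : v ≠ 0) (hQ : eval v Q1 = 0)
    (hC : eval v C2 = 0) : v 2 ≠ 0 := by
  intro hz
  rw [eval_Q1, hz] at hQ
  rw [eval_C2, hz] at hC
  have hx : v 0 = 0 := by
    rcases mul_eq_zero.mp (by linear_combination -hC : v 0 * v 1 ^ 2 = 0) with hx | hy
    · exact hx
    · have hy := pow_eq_zero_iff two_ne_zero |>.mp hy
      exact pow_eq_zero_iff two_ne_zero |>.mp
        (by linear_combination hQ / 2 - (v 1 / 2 - v 0) * hy)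
  have hy : v 1 = 0 := pow_eq_zero_iff two_ne_zero |>.mp
    (by linear_combination hQ + (2 * v 1 - 2 * v 0) * hx)
  exact hv (by ext i; fin_cases i <;> assumption)

lemma Q1_C1_cases {a b c : ℂ} (hc : c ≠ 0)
    (hQ : b ^ 2 + 2 * a ^ 2 - 2 * a * b - 5 * a * c + 2 * b * c + 3 * c ^ 2 = 0)
    (hC : b ^ 2 * c + a ^ 3 - 4 * a ^ 2 * c + 3 * a * c ^ 2 = 0) :
    a = c ∧ b = 0 ∨ b = a ∧ a ^ 2 - 3 * a * c + 3 * c ^ 2 = 0 := by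
  have hfac : (a - c) * (a ^ 2 - 5 * a * c + 3 * c ^ 2 + 2 * b * c) = 0 := by
    linear_combination hC - c * hQ
  rcases mul_eq_zero.mp hfac with hac | hres
  · exact Or.inl ⟨sub_eq_zero.mp hac, pow_eq_zero_iff two_ne_zero |>.mp
      (by linear_combination hQ + (-2 * a + 2 * b + 3 * c) * hac)⟩
  · have hq : a ^ 2 - 3 * a * c + 3 * c ^ 2 = 0 := pow_eq_zero_iff two_ne_zero |>.mp
      (by linear_combination 4 * c ^ 2 * hQ - (c ^ 2 + 2 * b * c + a * c - a ^ 2) * hres)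
    have hba : 2 * c * (b - a) = 0 := by linear_combination hres - hq
    exact Or.inr ⟨by simpa [hc, sub_eq_zero] using hba, hq⟩

lemma Q1_C2_cases {a b c : ℂ} (hc : c ≠ 0)
    (hQ : b ^ 2 + 2 * a ^ 2 - 2 * a * b - 5 * a * c + 2 * b * c + 3 * c ^ 2 = 0)
    (hC : 2 * b ^ 2 * c - a * b ^ 2 + 4 * a ^ 2 * c - 12 * a * c ^ 2 + 9 * c ^ 3 = 0) :
    2 * a = 3 * c ∧ b = 0 ∨ b = a ∧ a ^ 2 - 3 * a * c + 3 * c ^ 2 = 0 := by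
  have hb : b * (2 * (a - c) * (a - 2 * c)) = (2 * a - 3 * c) * (a ^ 2 - a * c - c ^ 2) := by
    linear_combination (2 * c - a) * hQ - hC
  have hfac : (2 * a - 3 * c) * (a ^ 2 - 3 * a * c + 3 * c ^ 2) = 0 := by
    refine pow_eq_zero_iff two_ne_zero |>.mp ?_
    linear_combination (2 * (a - c) * (a - 2 * c)) ^ 2 * hQ -
      (b * (2 * (a - c) * (a - 2 * c)) + (2 * a - 3 * c) * (a ^ 2 - a * c - c ^ 2) +
        (2 * c - 2 * a) * (2 * (a - c) * (a - 2 * c))) * hb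
  rcases mul_eq_zero.mp hfac with hP | hq
  · have hbc : b * c ^ 2 = 0 := by
      linear_combination
        -2 * hb + (b * (2 * a - 3 * c) - 2 * (a ^ 2 - a * c - c ^ 2)) * hP
    exact Or.inl ⟨by linear_combination hP, by simpa [hc] using hbc⟩
  · have hba : c ^ 2 * (b - a) = 0 := by linear_combination (b - a - c / 2) * hq - hb / 2
    exact Or.inr ⟨by simpa [hc, sub_eq_zero] using hba, hq⟩

lemma exists_smul_P2_or_P3 {v : Fin 3 → ℂ} {reps : List (Fin 3 → ℂ)} (h2 : P2 ∈ reps)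
    (h3 : P3 ∈ reps) (hz : v 2 ≠ 0) (hyx : v 1 = v 0)
    (hq : v 0 ^ 2 - 3 * v 0 * v 2 + 3 * v 2 ^ 2 = 0) :
    ∃ t : ℂ, t ≠ 0 ∧ ∃ w ∈ reps, v = t • w := by
  have hfac : (2 * v 0 - (3 + s3) * v 2) * (2 * v 0 - (3 - s3) * v 2) = 0 := by
    linear_combination 4 * hq - v 2 ^ 2 * s3_sq
  rcases mul_eq_zero.mp hfac with h | h
  · exact exists_smul_mem_of_cross_mul h2 hz two_ne_zero
      (show v 0 * 2 = (3 + s3) * v 2 by linear_combination h)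
      (show v 1 * 2 = (3 + s3) * v 2 by linear_combination h + 2 * hyx)
  · exact exists_smul_mem_of_cross_mul h3 hz two_ne_zero
      (show v 0 * 2 = (3 - s3) * v 2 by linear_combination h)
      (show v 1 * 2 = (3 - s3) * v 2 by linear_combination h + 2 * hyx)

theorem commonZerosExactly_Q1_C1 : CommonZerosExactly Q1 C1 [P1, P2, P3] := by
  obtain ⟨hP2, hP3⟩ := forall_P2_P3 (p := fun w => eval w Q1 = 0 ∧ eval w C1 = 0)
    fun _ hj => ⟨eval_Q1_diag hj, eval_C1_diag hj⟩
  have hP1 : eval P1 Q1 = 0 ∧ eval P1 C1 = 0 := by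
    rw [eval_Q1, eval_C1]
    simp only [P1, Matrix.cons_val]
    norm_num
  refine ⟨?_, fun v hv hQ hC => ?_⟩
  · simp only [List.mem_cons, List.not_mem_nil, or_false]
    rintro w (rfl | rfl | rfl)
    exacts [hP1, hP2, hP3]
  have hz := z_ne_zero_of_Q1_C1 hv hQ hC
  rw [eval_Q1] at hQ
  rw [eval_C1] at hC
  rcases Q1_C1_cases hz hQ hC with ⟨hx, hy⟩ | ⟨hyx, hq⟩
  · exact exists_smul_mem_of_cross_mul (w := P1) List.mem_cons_self hz one_ne_zero
      (show v 0 * 1 = 1 * v 2 by linear_combination hx)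
      (show v 1 * 1 = 0 * v 2 by linear_combination hy)
  · exact exists_smul_P2_or_P3 (by simp) (by simp) hz hyx hq

theorem commonZerosExactly_Q1_C2 : CommonZerosExactly Q1 C2 [P, P2, P3] := by
  obtain ⟨hP2, hP3⟩ := forall_P2_P3 (p := fun w => eval w Q1 = 0 ∧ eval w C2 = 0)
    fun _ hj => ⟨eval_Q1_diag hj, eval_C2_diag hj⟩
  have hP : eval P Q1 = 0 ∧ eval P C2 = 0 := by
    rw [eval_Q1, eval_C2]
    simp only [P, Matrix.cons_val]
    norm_num
  refine ⟨?_, fun v hv hQ hC => ?_⟩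
  · simp only [List.mem_cons, List.not_mem_nil, or_false]
    rintro w (rfl | rfl | rfl)
    exacts [hP, hP2, hP3]
  have hz := z_ne_zero_of_Q1_C2 hv hQ hC
  rw [eval_Q1] at hQ
  rw [eval_C2] at hC
  rcases Q1_C2_cases hz hQ hC with ⟨hx, hy⟩ | ⟨hyx, hq⟩
  · exact exists_smul_mem_of_cross_mul (w := P) List.mem_cons_self hz two_ne_zero
      (show v 0 * 2 = 3 * v 2 by linear_combination hx)
      (show v 1 * 2 = 0 * v 2 by linear_combination 2 * hy)
  · exact exists_smul_P2_or_P3 (by simp) (by simp) hz hyx hq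

lemma tangentAt_Q1_C1_P1 : TangentAt Q1 C1 P1 := by
  refine tangentAt_of_eq_smul (t := 2) ?_ two_ne_zero ?_ <;> rw [grad_Q1]
  · intro h
    have h0 := congrFun h 0
    simp only [P1, Matrix.cons_val] at h0
    norm_num at h0
  · rw [grad_C1, Matrix.smul_vec3]
    simp only [P1, Matrix.cons_val]
    norm_num

lemma grad_C2_P : grad C2 P = 0 := by
  rw [grad_C2]
  simp only [P, Matrix.cons_val]
  norm_num
  exact (Matrix.empty_eq _).symm

/-- the Oort–Peters conic–cubic intersections:
(a) `Q1·C1 = 2(P1+P2+P3)`, (b) `Q1·C2 = 2(P+P2+P3)` (with `C2` singular at `P`),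
(c) `Q2·C1 = 2(P1+P4+P5)`, (d) `Q2·C2 = 2(P4+P5+P)` (with `C2` singular at `P`). -/
theorem OP_conic_cubic_intersections :
    (CommonZerosExactly Q1 C1 [P1, P2, P3] ∧
      TangentAt Q1 C1 P1 ∧ TangentAt Q1 C1 P2 ∧ TangentAt Q1 C1 P3) ∧
    (CommonZerosExactly Q1 C2 [P, P2, P3] ∧
      TangentAt Q1 C2 P2 ∧ TangentAt Q1 C2 P3 ∧ grad C2 P = 0) ∧
    (CommonZerosExactly Q2 C1 [P1, P4, P5] ∧
      TangentAt Q2 C1 P1 ∧ TangentAt Q2 C1 P4 ∧ TangentAt Q2 C1 P5) ∧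
    (CommonZerosExactly Q2 C2 [P, P4, P5] ∧
      TangentAt Q2 C2 P4 ∧ TangentAt Q2 C2 P5 ∧ grad C2 P = 0) := by
  obtain ⟨hC1P2, hC1P3⟩ := forall_P2_P3 fun _ hj => tangentAt_Q1_C1_diag hj
  obtain ⟨hC2P2, hC2P3⟩ := forall_P2_P3 fun _ hj => tangentAt_Q1_C2_diag hj
  have flip_C1 {v} (h : TangentAt Q1 C1 v) : TangentAt Q2 C1 (flipY v) :=
    h.map flipY (grad_Q2_flipY v) (grad_C1_flipY v)
  have flip_C2 {v} (h : TangentAt Q1 C2 v) : TangentAt Q2 C2 (flipY v) :=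
    h.map flipY (grad_Q2_flipY v) (grad_C2_flipY v)
  refine ⟨⟨commonZerosExactly_Q1_C1, tangentAt_Q1_C1_P1, hC1P2, hC1P3⟩,
    ⟨commonZerosExactly_Q1_C2, hC2P2, hC2P3, grad_C2_P⟩,
    ⟨?_, ?_, ?_, ?_⟩, ⟨?_, ?_, ?_, grad_C2_P⟩⟩
  · rw [← flipY_P1, ← flipY_P2, ← flipY_P3]
    exact commonZerosExactly_Q1_C1.map flipY eval_Q2_flipY eval_C1_flipY
  · exact flipY_P1 ▸ flip_C1 tangentAt_Q1_C1_P1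
  · exact flipY_P2 ▸ flip_C1 hC1P2
  · exact flipY_P3 ▸ flip_C1 hC1P3
  · rw [← flipY_P, ← flipY_P2, ← flipY_P3]
    exact commonZerosExactly_Q1_C2.map flipY eval_Q2_flipY eval_C2_flipY
  · exact flipY_P2 ▸ flip_C2 hC2P2
  · exact flipY_P3 ▸ flip_C2 hC2P3
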